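/- Let β ≤ 0 ≤ α with (α, β) ≠ (0, 0), and let u = w·v be a triangular pulse of amplitude w < β < 0 reflected (i.e., u(t) = w·v(t) with w < 0, so min u = w < β). If the initial state of the relay R_{α,β} is +1, then the final state after the pulse is −1; if β < w ≤ 0, the final state equals the initial state. -/
import Mathlib


open Set Classical

/-- The unit triangular pulse of duration `τ`: rises linearly from `0` to `1` on
`[0, τ/2]` and descends back to `0` on `(τ/2, τ]`. -/
noncomputable def triPulse0 (τ : ℝ) (t : ℝ) : ℝ :=
  if 0 ≤ t ∧ t ≤ τ / 2 then 2 / τ * t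
  else if τ / 2 < t ∧ t ≤ τ then 2 / τ * (τ - t)
  else 0

/-- State of the relay `R_{α,β}` at time `t` for an input `u` on `[0, t]` with
initial state `s₀`. -/
noncomputable def relayState (α β s₀ : ℝ) (u : ℝ → ℝ) (t : ℝ) : ℝ :=
  if ∃ r ∈ Icc 0 t, α < u r ∧ ∀ q ∈ Icc r t, β ≤ u q then 1
  else if ∃ r ∈ Icc 0 t, u r < β ∧ ∀ q ∈ Icc r t, u q ≤ α then -1
  else s₀

lemma triPulse0_nonneg (τ t : ℝ) (hτ : 0 < τ) : 0 ≤ triPulse0 τ t := by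
  unfold triPulse0
  split_ifs with h1 h2
  · have := h1.1; positivity
  · have : 0 ≤ τ - t := by linarith [h2.2]
    positivity
  · exact le_refl 0

lemma triPulse0_le_one (τ t : ℝ) (hτ : 0 < τ) : triPulse0 τ t ≤ 1 := by
  unfold triPulse0
  split_ifs with h1 h2
  · have h := h1.2
    calc 2 / τ * t ≤ 2 / τ * (τ / 2) := by
          apply mul_le_mul_of_nonneg_left h; positivity
      _ = 1 := by field_simp
  · have h : τ - t ≤ τ / 2 := by linarith [h2.1]
    calc 2 / τ * (τ - t) ≤ 2 / τ * (τ / 2) := by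
          apply mul_le_mul_of_nonneg_left h; positivity
      _ = 1 := by field_simp
  · norm_num

lemma triPulse0_half (τ : ℝ) (hτ : 0 < τ) : triPulse0 τ (τ / 2) = 1 := by
  unfold triPulse0
  rw [if_pos ⟨by linarith, le_refl _⟩]
  field_simp

/-- Relay switching under a negative triangular pulse: for thresholds
`β ≤ 0 ≤ α` with `(α, β) ≠ (0, 0)` and the reflected pulse `u = w · v` with
`w < β < 0`, the relay starting at `+1` ends at `-1`; if `β < w ≤ 0` the final
state equals the initial state. -/
theorem relay_switching_negative_pulse
    (τ α β w : ℝ) (hτ : 0 < τ) (hβ : β ≤ 0) (hα : 0 ≤ α)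
    (hne : ¬(α = 0 ∧ β = 0)) :
    (w < β → β < 0 → relayState α β 1 (fun t => w * triPulse0 τ t) τ = -1) ∧
    (β < w → w ≤ 0 → ∀ s₀ : ℝ,
      relayState α β s₀ (fun t => w * triPulse0 τ t) τ = s₀) := by
  constructor
  · intro hwβ hβ0
    have hw0 : w < 0 := lt_trans hwβ hβ0
    have hup : ¬ ∃ r ∈ Icc (0:ℝ) τ, α < w * triPulse0 τ r ∧
        ∀ q ∈ Icc r τ, β ≤ w * triPulse0 τ q := by
      rintro ⟨r, _, hr, _⟩
      have : w * triPulse0 τ r ≤ 0 :=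
        mul_nonpos_of_nonpos_of_nonneg hw0.le (triPulse0_nonneg τ r hτ)
      linarith
    rw [relayState, if_neg hup, if_pos]
    refine ⟨τ / 2, ⟨by linarith, by linarith⟩, ?_, ?_⟩
    · rw [triPulse0_half τ hτ]; simpa using hwβ
    · intro q _
      have : w * triPulse0 τ q ≤ 0 :=
        mul_nonpos_of_nonpos_of_nonneg hw0.le (triPulse0_nonneg τ q hτ)
      linarith
  · intro hβw hw0 s₀
    have hup : ¬ ∃ r ∈ Icc (0:ℝ) τ, α < w * triPulse0 τ r ∧
        ∀ q ∈ Icc r τ, β ≤ w * triPulse0 τ q := by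
      rintro ⟨r, _, hr, _⟩
      have : w * triPulse0 τ r ≤ 0 :=
        mul_nonpos_of_nonpos_of_nonneg hw0 (triPulse0_nonneg τ r hτ)
      linarith
    have hdown : ¬ ∃ r ∈ Icc (0:ℝ) τ, w * triPulse0 τ r < β ∧
        ∀ q ∈ Icc r τ, w * triPulse0 τ q ≤ α := by
      rintro ⟨r, _, hr, _⟩
      have : w ≤ w * triPulse0 τ r := by
        nlinarith [triPulse0_le_one τ r hτ, triPulse0_nonneg τ r hτ]
      linarith
    rw [relayState, if_neg hup, if_neg hdown]
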